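/- Let d = 3 and let Q_2 = [2/5,3/5]^3 ∈ Q_1^(3)(F^(3)). Then for every real p > 1 and every integer m ≥ 1, E_{p,m}(Q_2, Γ(Q_2)^c) ≤ 7(12·5^m − 16). -/

import Mathlib

open Set MeasureTheory Filter
open scoped Classical

noncomputable section

/-- Points of `ℝ^d` with the Euclidean metric. -/
abbrev Pt (d : ℕ) := EuclideanSpace ℝ (Fin d)

/-- The closed cube `∏ [(lᵢ-1)/5ⁿ, lᵢ/5ⁿ]`. -/
def cube (d n : ℕ) (l : Fin d → ℕ) : Set (Pt d) :=
  {x | ∀ i, ((l i : ℝ) - 1) / 5 ^ n ≤ x i ∧ x i ≤ (l i : ℝ) / 5 ^ n}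

/-- The collection `𝒬ₙ⁽ᵈ⁾` of level-`n` cubes. -/
def Qcol (d n : ℕ) : Set (Set (Pt d)) :=
  {Q | ∃ l : Fin d → ℕ, (∀ i, 1 ≤ l i ∧ l i ≤ 5 ^ n) ∧ Q = cube d n l}

/-- `𝒬ₙ⁽ᵈ⁾(A)`: the level-`n` cubes whose interior meets `A`. -/
def QcolOf (d n : ℕ) (A : Set (Pt d)) : Set (Set (Pt d)) :=
  {Q | Q ∈ Qcol d n ∧ (interior Q ∩ A).Nonempty}

/-- `F₀⁽ᵈ⁾ = [0,1]^d`. -/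
def F0 (d : ℕ) : Set (Pt d) := {x | ∀ i, x i ∈ Icc (0 : ℝ) 1}

/-- `F₁⁽ᵈ⁾`. -/
def F1 (d : ℕ) : Set (Pt d) :=
  F0 d \ ⋃ i : Fin d, {x | (∀ j, j < i → x j ∈ Ioo (2/5 : ℝ) (3/5)) ∧
    x i ∈ Ioo (1/5 : ℝ) (2/5) ∪ Ioo (3/5 : ℝ) (4/5) ∧
    ∀ j, i < j → x j ∈ Ioo (2/5 : ℝ) (3/5)}

/-- The orientation-preserving affine map from `[0,1]^d` onto the cube indexed by `l` at
level `n`. -/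
def psi (d n : ℕ) (l : Fin d → ℕ) (x : Pt d) : Pt d :=
  WithLp.toLp 2 (fun i => ((l i : ℝ) - 1) / 5 ^ n + x i / 5 ^ n)

/-- The approximations `Fₙ⁽ᵈ⁾`. -/
def Fn (d : ℕ) : ℕ → Set (Pt d)
  | 0 => F0 d
  | 1 => F1 d
  | n + 2 => ⋃ l ∈ {l : Fin d → ℕ | cube d 1 l ∈ QcolOf d 1 (F1 d)}, psi d 1 l '' Fn d (n + 1)

/-- The fractal `F⁽ᵈ⁾`. -/
def Fset (d : ℕ) : Set (Pt d) := ⋂ n, Fn d n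

/-- `G₁⁽ᵈ⁾`: union of the level-1 cubes of `F₁⁽ᵈ⁾` which meet the boundary of `[0,1]^d`. -/
def G1 (d : ℕ) : Set (Pt d) :=
  ⋃ Q ∈ {Q | Q ∈ QcolOf d 1 (F1 d) ∧ (Q ∩ frontier (F0 d)).Nonempty}, Q

/-- The approximations `Gₙ⁽ᵈ⁾`. -/
def Gn (d : ℕ) : ℕ → Set (Pt d)
  | 0 => F0 d
  | 1 => G1 d
  | n + 2 => ⋃ l ∈ {l : Fin d → ℕ | cube d 1 l ∈ QcolOf d 1 (G1 d)}, psi d 1 l '' Gn d (n + 1)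

/-- The boundary fractal `G⁽ᵈ⁾ = [0,1]^d ∩ ⋂_{n ≥ 1} Gₙ⁽ᵈ⁾`. -/
def Gset (d : ℕ) : Set (Pt d) := F0 d ∩ ⋂ n, ⋂ (_ : 1 ≤ n), Gn d n

/-- The discrete `p`-energy `𝓔ₚⁿ(f)` on the level-`n` cubes of `F⁽ᵈ⁾`. -/
def energy (d n : ℕ) (p : ℝ) (f : Set (Pt d) → ℝ) : ℝ :=
  (1 / 2) * ∑' Q : QcolOf d n (Fset d), ∑' Q' : QcolOf d n (Fset d),
    if ((Q : Set (Pt d)) ∩ (Q' : Set (Pt d))).Nonempty then |f Q - f Q'| ^ p else 0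

/-- `Sᵐ(A)`: level-`(n+m)` cubes of `F⁽ᵈ⁾` contained in some cube of `A`. -/
def Sm (d n m : ℕ) (A : Set (Set (Pt d))) : Set (Set (Pt d)) :=
  {Q | Q ∈ QcolOf d (n + m) (Fset d) ∧ ∃ Q' ∈ A, Q ⊆ Q'}

/-- The effective `p`-conductance `𝓔_{p,m}(A₁, A₂)`. -/
def conduct (d n m : ℕ) (p : ℝ) (A₁ A₂ : Set (Set (Pt d))) : ℝ :=
  sInf {e : ℝ | ∃ f : Set (Pt d) → ℝ,
    (∀ Q ∈ Sm d n m A₁, f Q = 1) ∧ (∀ Q ∈ Sm d n m A₂, f Q = 0) ∧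
    e = energy d (n + m) p f}

/-- `Γ(Q)`: level-`n` cubes of `F⁽ᵈ⁾` meeting `Q`. -/
def Gam (d n : ℕ) (Q : Set (Pt d)) : Set (Set (Pt d)) :=
  {Q' | Q' ∈ QcolOf d n (Fset d) ∧ (Q' ∩ Q).Nonempty}

/-- `Γ(Q)ᶜ = 𝒬ₙ⁽ᵈ⁾(F⁽ᵈ⁾) \ Γ(Q)`. -/
def GamC (d n : ℕ) (Q : Set (Pt d)) : Set (Set (Pt d)) :=
  QcolOf d n (Fset d) \ Gam d n Q

/-- The corner cube `[0, 1/5]^d`. -/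
def Qone (d : ℕ) : Set (Pt d) := {x | ∀ i, x i ∈ Icc (0 : ℝ) (1/5)}

/-- The center cube `[2/5, 3/5]^d`. -/
def Qtwo (d : ℕ) : Set (Pt d) := {x | ∀ i, x i ∈ Icc (2/5 : ℝ) (3/5)}

end

/-!
Take the potential that is `1` on the level-`(1+m)` cubes inside `Q₂` and `0` on the others; its
energy is at most the number of intersecting pairs (inside cube, outside cube of `F`). An outside
cube of `F` adjacent to `Q₂` cannot have exactly one index just outside the range of `Q₂`: it would
then lie in one of the tunnels removed from `F₁ ⊇ F`. So it sits along an edge of `Q₂`, and the pair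
is determined by the edge direction, the sides of the two other coordinates, the outer index along
the edge and the offset of the inner one: at most `3 · 4 · (5^m + 2) · 3 ≤ 7 (12 · 5^m - 16)` pairs.
-/

section CubeGeometry

variable {d n : ℕ}

lemma mem_Ioo_of_mem_interior_cube {l : Fin d → ℕ} {x : Pt d}
    (hx : x ∈ interior (cube d n l)) (i : Fin d) :
    ((l i : ℝ) - 1) / 5 ^ n < x i ∧ x i < (l i : ℝ) / 5 ^ n := by
  obtain ⟨ε, hε, hball⟩ := Metric.isOpen_iff.mp isOpen_interior x hx
  have hshift : ∀ s : ℝ, |s| < ε → ((l i : ℝ) - 1) / 5 ^ n ≤ x i + s ∧ x i + s ≤ l i / 5 ^ n := by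
    intro s hs
    have hball' : x + s • EuclideanSpace.single i (1 : ℝ) ∈ Metric.ball x ε := by
      simpa [dist_eq_norm, norm_smul] using hs
    simpa using interior_subset (hball hball') i
  have h₁ := (hshift (ε / 2) (by rw [abs_of_pos (by positivity)]; linarith)).2
  have h₂ := (hshift (-(ε / 2)) (by rw [abs_neg, abs_of_pos (by positivity)]; linarith)).1
  constructor <;> linarith

lemma coord_mem_Ioo_of_mem_interior_cube {l : Fin d → ℕ} {x : Pt d}
    (hx : x ∈ interior (cube d n l)) {i : Fin d} {lo hi : ℕ}
    (hlo : lo + 1 ≤ l i) (hhi : l i ≤ hi) :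
    x i ∈ Ioo ((lo : ℝ) / 5 ^ n) (hi / 5 ^ n) := by
  obtain ⟨h₁, h₂⟩ := mem_Ioo_of_mem_interior_cube hx i
  have hlo' : (lo : ℝ) ≤ l i - 1 := by
    have : ((lo + 1 : ℕ) : ℝ) ≤ l i := by exact_mod_cast hlo
    push_cast at this
    linarith
  have hhi' : (l i : ℝ) ≤ hi := by exact_mod_cast hhi
  exact ⟨(div_le_div_of_nonneg_right hlo' (by positivity)).trans_lt h₁,
    h₂.trans_le (div_le_div_of_nonneg_right hhi' (by positivity))⟩

lemma cube_subset_box_iff (l : Fin d → ℕ) (lo hi : ℕ) :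
    cube d n l ⊆ {x | ∀ i, x i ∈ Icc ((lo : ℝ) / 5 ^ n) (hi / 5 ^ n)} ↔
      ∀ j, lo + 1 ≤ l j ∧ l j ≤ hi := by
  have h5 : (0 : ℝ) < 5 ^ n := by positivity
  constructor
  · intro h j
    have hcentre : (WithLp.toLp 2 (fun i => ((l i : ℝ) - 1 / 2) / 5 ^ n) : Pt d) ∈ cube d n l :=
      fun i => by dsimp only; constructor <;> gcongr <;> linarith
    obtain ⟨h₁, h₂⟩ := h hcentre j
    rw [div_le_div_iff_of_pos_right h5] at h₁ h₂
    have hlo : (lo : ℝ) < l j := by linarith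
    have hhi : (l j : ℝ) < hi + 1 := by linarith
    exact ⟨by exact_mod_cast hlo, Nat.lt_add_one_iff.mp (by exact_mod_cast hhi)⟩
  · intro h x hx j
    obtain ⟨hlo, hhi⟩ := h j
    have hlo' : (lo : ℝ) ≤ l j - 1 := by
      have : ((lo + 1 : ℕ) : ℝ) ≤ l j := by exact_mod_cast hlo
      push_cast at this
      linarith
    have hhi' : (l j : ℝ) ≤ hi := by exact_mod_cast hhi
    exact ⟨(div_le_div_of_nonneg_right hlo' h5.le).trans (hx j).1,
      (hx j).2.trans (div_le_div_of_nonneg_right hhi' h5.le)⟩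

lemma le_add_one_of_cube_inter_nonempty {l l' : Fin d → ℕ}
    (h : (cube d n l ∩ cube d n l').Nonempty) (j : Fin d) : l j ≤ l' j + 1 := by
  obtain ⟨x, hx, hx'⟩ := h
  have : ((l j : ℝ) - 1) / 5 ^ n ≤ l' j / 5 ^ n := (hx j).1.trans (hx' j).2
  rw [div_le_div_iff_of_pos_right (by positivity)] at this
  have : (l j : ℝ) ≤ l' j + 1 := by linarith
  exact_mod_cast this

lemma QcolOf_finite (d n : ℕ) (A : Set (Pt d)) : (QcolOf d n A).Finite := by
  refine ((Set.Finite.pi' fun _ => Set.finite_Iic (5 ^ n)).image (cube d n)).subset ?_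
  rintro Q ⟨⟨l, hl, rfl⟩, -⟩
  exact ⟨l, fun i => (hl i).2, rfl⟩

lemma Fset_subset_F1 : Fset d ⊆ F1 d :=
  iInter_subset (Fn d) 1

end CubeGeometry

lemma natCast_mul_five_pow_div (k m : ℕ) : ((k * 5 ^ m : ℕ) : ℝ) / 5 ^ (1 + m) = k / 5 := by
  push_cast
  rw [pow_add]
  field_simp

section Qtwo

variable {d : ℕ} (m : ℕ)

lemma Qtwo_eq_box :
    Qtwo d = {x | ∀ i, x i ∈ Icc (((2 * 5 ^ m : ℕ) : ℝ) / 5 ^ (1 + m))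
      (((3 * 5 ^ m : ℕ) : ℝ) / 5 ^ (1 + m))} := by
  simp only [natCast_mul_five_pow_div]
  norm_num [Qtwo]

lemma cube_subset_Qtwo_iff (l : Fin d → ℕ) :
    cube d (1 + m) l ⊆ Qtwo d ↔ ∀ j, 2 * 5 ^ m + 1 ≤ l j ∧ l j ≤ 3 * 5 ^ m := by
  rw [Qtwo_eq_box m, cube_subset_box_iff]

-- Such a cube lies in one of the tunnels removed from `[0,1]^d` to form `F₁`.
lemma disjoint_interior_cube_F1 {l : Fin d → ℕ} {i : Fin d}
    (hi : l i = 2 * 5 ^ m ∨ l i = 3 * 5 ^ m + 1)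
    (hothers : ∀ j ≠ i, 2 * 5 ^ m + 1 ≤ l j ∧ l j ≤ 3 * 5 ^ m) :
    Disjoint (interior (cube d (1 + m) l)) (F1 d) := by
  refine Set.disjoint_left.2 fun x hx hxF => hxF.2 (mem_iUnion.2 ⟨i, ?_⟩)
  have hpos : 1 ≤ 5 ^ m := Nat.one_le_pow _ _ (by norm_num)
  have hcoord : ∀ j (k₁ k₂ : ℕ), k₁ * 5 ^ m + 1 ≤ l j → l j ≤ k₂ * 5 ^ m →
      x j ∈ Ioo ((k₁ : ℝ) / 5) (k₂ / 5) := fun j _ _ h₁ h₂ => by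
    simpa only [natCast_mul_five_pow_div] using coord_mem_Ioo_of_mem_interior_cube hx h₁ h₂
  have hcentre : ∀ j ≠ i, x j ∈ Ioo (2 / 5 : ℝ) (3 / 5) := fun j hj => by
    simpa using hcoord j 2 3 (hothers j hj).1 (hothers j hj).2
  refine ⟨fun j hj => hcentre j hj.ne, ?_, fun j hj => hcentre j hj.ne'⟩
  rcases hi with hi | hi
  · left
    simpa using hcoord i 1 2 (by omega) (by omega)
  · right
    simpa using hcoord i 3 4 (by omega) (by omega)

end Qtwo

section Energy

variable {d n : ℕ}

lemma energy_nonneg (p : ℝ) (f : Set (Pt d) → ℝ) : 0 ≤ energy d n p f :=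
  mul_nonneg (by norm_num) <| tsum_nonneg fun _ => tsum_nonneg fun _ => by
    split_ifs
    exacts [Real.rpow_nonneg (abs_nonneg _) _, le_rfl]

lemma conduct_le_energy {m : ℕ} {p : ℝ} {A₁ A₂ : Set (Set (Pt d))} {f : Set (Pt d) → ℝ}
    (hf₁ : ∀ Q ∈ Sm d n m A₁, f Q = 1) (hf₀ : ∀ Q ∈ Sm d n m A₂, f Q = 0) :
    conduct d n m p A₁ A₂ ≤ energy d (n + m) p f :=
  csInf_le ⟨0, by rintro _ ⟨g, -, -, rfl⟩; exact energy_nonneg p g⟩ ⟨f, hf₁, hf₀, rfl⟩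

lemma subset_of_mem_Sm_singleton {m : ℕ} {K Q : Set (Pt d)} (hQ : Q ∈ Sm d n m {K}) :
    Q ⊆ K := by
  obtain ⟨-, _, rfl, hsub⟩ := hQ
  exact hsub

lemma not_subset_of_mem_Sm_GamC {m : ℕ} {K Q : Set (Pt d)} (hQ : Q ∈ Sm d n m (GamC d n K)) :
    ¬ Q ⊆ K := by
  obtain ⟨⟨-, x, hx, -⟩, Q', ⟨hQ', hQ'K⟩, hsub⟩ := hQ
  exact fun hQK => hQ'K ⟨hQ', x, hsub (interior_subset hx), hQK (interior_subset hx)⟩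

def crossingPairs (d n : ℕ) (P : Set (Pt d) → Prop) :
    Set (QcolOf d n (Fset d) × QcolOf d n (Fset d)) :=
  {pp | ((pp.1 : Set (Pt d)) ∩ pp.2).Nonempty ∧ P pp.1 ∧ ¬ P pp.2}

lemma energy_indicator_le {p : ℝ} (hp : 0 < p) (P : Set (Pt d) → Prop) :
    energy d n p (fun S => if P S then 1 else 0) ≤ Nat.card (crossingPairs d n P) := by
  have := (QcolOf_finite d n (Fset d)).fintype
  set C := crossingPairs d n P
  have hterm : ∀ Q Q' : QcolOf d n (Fset d),
      (if ((Q : Set (Pt d)) ∩ Q').Nonempty then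
        |((if P Q then 1 else 0) - (if P Q' then 1 else 0) : ℝ)| ^ p else 0) ≤
      (if (Q, Q') ∈ C then 1 else 0) + (if (Q', Q) ∈ C then 1 else 0) := by
    intro Q Q'
    by_cases hadj : ((Q : Set (Pt d)) ∩ Q').Nonempty
    · have hadj' : ((Q' : Set (Pt d)) ∩ Q).Nonempty := by rwa [inter_comm]
      by_cases hQ : P Q <;> by_cases hQ' : P Q' <;>
        simp [C, crossingPairs, hadj, hadj', hQ, hQ', Real.zero_rpow hp.ne']
    · rw [if_neg hadj]
      positivity
  have hcount : ∑ Q : QcolOf d n (Fset d), ∑ Q' : QcolOf d n (Fset d),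
      (if (Q, Q') ∈ C then (1 : ℝ) else 0) = Nat.card C := by
    rw [← Finset.sum_product', Finset.univ_product_univ, Finset.sum_boole,
      Nat.card_eq_card_toFinset]
    congr 2
    ext
    simp
  unfold energy
  simp only [tsum_fintype]
  calc (1 / 2 : ℝ) * ∑ Q, ∑ Q', _
      ≤ 1 / 2 * ∑ Q : QcolOf d n (Fset d), ∑ Q' : QcolOf d n (Fset d),
          ((if (Q, Q') ∈ C then (1 : ℝ) else 0) + (if (Q', Q) ∈ C then 1 else 0)) := by
        gcongr with Q _ Q' _
        exact hterm Q Q'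
    _ = Nat.card C := by
        simp only [Finset.sum_add_distrib]
        rw [Finset.sum_comm (f := fun Q Q' => if (Q', Q) ∈ C then (1 : ℝ) else 0), hcount]
        ring

end Energy

section EdgeCount

/-- Parameters `((J, s), v, δ)` of a pair of adjacent index vectors along an edge of the box
`[a+1, b]³`: `J` is the free coordinate, `s j` selects the side of the box in coordinate `j ≠ J`,
`v` is the outer index in coordinate `J` and `δ - 1` the offset of the inner one. -/
def edgeParams (a b : ℕ) : Finset ((Fin 3 × (Fin 3 → Bool)) × ℕ × ℕ) :=
  (Finset.univ.filter fun e : Fin 3 × (Fin 3 → Bool) => e.2 e.1 = false) ×ˢ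
    Finset.Icc a (b + 1) ×ˢ Finset.range 3

def edgeOuter (a b : ℕ) (t : (Fin 3 × (Fin 3 → Bool)) × ℕ × ℕ) : Fin 3 → ℕ :=
  fun j => if j = t.1.1 then t.2.1 else if t.1.2 j then b + 1 else a

def edgeInner (a b : ℕ) (t : (Fin 3 × (Fin 3 → Bool)) × ℕ × ℕ) : Fin 3 → ℕ :=
  fun j => if j = t.1.1 then t.2.1 + t.2.2 - 1 else if t.1.2 j then b else a + 1

lemma card_edgeParams (a b : ℕ) : (edgeParams a b).card = 36 * (b + 2 - a) := by
  have h : (Finset.univ.filter fun e : Fin 3 × (Fin 3 → Bool) => e.2 e.1 = false).card = 12 := by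
    decide
  rw [edgeParams, Finset.card_product, Finset.card_product, h, Nat.card_Icc, Finset.card_range]
  ring

lemma exists_mem_edgeParams {a b : ℕ} {l l' : Fin 3 → ℕ} (hl : ∀ j, a + 1 ≤ l j ∧ l j ≤ b)
    (hadj : ∀ j, l j ≤ l' j + 1 ∧ l' j ≤ l j + 1) (hout : ¬ ∀ j, a + 1 ≤ l' j ∧ l' j ≤ b)
    (htunnel : ∀ i, l' i = a ∨ l' i = b + 1 → ¬ ∀ j ≠ i, a + 1 ≤ l' j ∧ l' j ≤ b) :
    ∃ t ∈ edgeParams a b, l = edgeInner a b t ∧ l' = edgeOuter a b t := by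
  have hext : ∀ j, ¬ (a + 1 ≤ l' j ∧ l' j ≤ b) → l' j = a ∨ l' j = b + 1 := fun j h => by
    have := hl j
    have := hadj j
    omega
  obtain ⟨i, hi⟩ := not_forall.1 hout
  obtain ⟨j, hj⟩ := not_forall.1 (htunnel i (hext i hi))
  obtain ⟨hji, hj⟩ := Classical.not_imp.1 hj
  have hthird : ∀ i j : Fin 3, i ≠ j → ∃ k, ∀ x, x ≠ k → x = i ∨ x = j := by decide
  obtain ⟨k, hk⟩ := hthird j i hji
  have hedge : ∀ x ≠ k, l' x = a ∨ l' x = b + 1 := by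
    intro x hx
    rcases hk x hx with rfl | rfl
    exacts [hext x hj, hext x hi]
  refine ⟨((k, fun x => decide (x ≠ k ∧ l' x = b + 1)), l' k, l k + 1 - l' k), ?_, ?_, ?_⟩
  · have := hl k
    have := hadj k
    simp only [edgeParams, Finset.mem_product, Finset.mem_filter, Finset.mem_univ,
      Finset.mem_Icc, Finset.mem_range]
    refine ⟨by simp, by omega, by omega⟩
  all_goals
    funext x
    have := hl x
    have := hadj x
    by_cases hx : x = k
    · subst hx
      simp only [edgeInner, edgeOuter, ↓reduceIte] <;> omega
    · have := hedge x hx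
      simp only [edgeInner, edgeOuter, hx, ↓reduceIte, ne_eq, not_false_eq_true, true_and,
        decide_eq_true_eq]
      split_ifs <;> omega

lemma card_crossingPairs_Qtwo_le (m : ℕ) :
    Nat.card (crossingPairs 3 (1 + m) (· ⊆ Qtwo 3)) ≤ 36 * (5 ^ m + 2) := by
  have key : ∀ pp : crossingPairs 3 (1 + m) (· ⊆ Qtwo 3),
      ∃ t ∈ edgeParams (2 * 5 ^ m) (3 * 5 ^ m),
        (pp.1.1 : Set (Pt 3)) = cube 3 (1 + m) (edgeInner (2 * 5 ^ m) (3 * 5 ^ m) t) ∧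
        (pp.1.2 : Set (Pt 3)) = cube 3 (1 + m) (edgeOuter (2 * 5 ^ m) (3 * 5 ^ m) t) := by
    rintro ⟨⟨⟨_, ⟨l, -, rfl⟩, -⟩, ⟨_, ⟨l', -, rfl⟩, x, hx, hxF⟩⟩, hadj, hin, hout⟩
    obtain ⟨t, ht, rfl, rfl⟩ := exists_mem_edgeParams ((cube_subset_Qtwo_iff m l).1 hin)
      (fun j => ⟨le_add_one_of_cube_inter_nonempty hadj j,
        le_add_one_of_cube_inter_nonempty (inter_comm _ _ ▸ hadj) j⟩)
      (fun h => hout ((cube_subset_Qtwo_iff m l').2 h))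
      (fun i hi hothers => Set.disjoint_left.1 (disjoint_interior_cube_F1 m hi hothers) hx
        (Fset_subset_F1 hxF))
    exact ⟨t, ht, rfl, rfl⟩
  choose φ hφ hφeq using key
  have hinj : Function.Injective
      fun pp => (⟨φ pp, hφ pp⟩ : edgeParams (2 * 5 ^ m) (3 * 5 ^ m)) := by
    intro pp qq h
    have h' : φ pp = φ qq := congrArg Subtype.val h
    ext <;> simp only [(hφeq _).1, (hφeq _).2, h']
  calc Nat.card (crossingPairs 3 (1 + m) (· ⊆ Qtwo 3))
      ≤ Nat.card (edgeParams (2 * 5 ^ m) (3 * 5 ^ m)) := Nat.card_le_card_of_injective _ hinj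
    _ = 36 * (5 ^ m + 2) := by
        rw [Nat.card_eq_fintype_card, Fintype.card_coe, card_edgeParams]
        omega

end EdgeCount

/-- Upper bound on the conductance of the center cube `Q₂ = [2/5,3/5]³` in `F⁽³⁾`. -/
theorem statement5 (p : ℝ) (hp : 1 < p) (m : ℕ) (hm : 1 ≤ m) :
    conduct 3 1 m p {Qtwo 3} (GamC 3 1 (Qtwo 3)) ≤ 7 * (12 * 5 ^ m - 16 : ℝ) := by
  have h5 : (5 : ℝ) ≤ 5 ^ m := le_self_pow₀ (by norm_num) (by omega)
  calc conduct 3 1 m p {Qtwo 3} (GamC 3 1 (Qtwo 3))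
      ≤ energy 3 (1 + m) p (fun S => if S ⊆ Qtwo 3 then 1 else 0) :=
        conduct_le_energy (fun _ hQ => if_pos (subset_of_mem_Sm_singleton hQ))
          (fun _ hQ => if_neg (not_subset_of_mem_Sm_GamC hQ))
    _ ≤ Nat.card (crossingPairs 3 (1 + m) (· ⊆ Qtwo 3)) := energy_indicator_le (by linarith) _
    _ ≤ 36 * (5 ^ m + 2) := by exact_mod_cast card_crossingPairs_Qtwo_le m
    _ ≤ 7 * (12 * 5 ^ m - 16) := by linarith
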